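/- Let d ≥ 1, 1 ≤ κ ≤ d, and suppose (κ−1)d − κ(κ−5)/2 ≤ i ≤ κd − κ(κ−1)/2. Let I_d and I_{d+1} be the lex segments of colength d + i in degrees d and d + 1 (in x₁, x₂, x₃). Then the monomials in I_{d+1} divisible by no element of I_d are exactly the κ monomials x₁^{κ} x₂^{e+t} x₃^{(d+1−κ−e)−t} for t = 0, 1, …, κ−1, where e = i − (κ−1)d + κ(κ−5)/2; in particular there are exactly κ of them and every one is divisible by x₃. -/
import Mathlib


/-- Monomials `x₁^a x₂^b x₃^c` of degree `d` in three variables,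
encoded as triples `(a, b, c)` with `a + b + c = d`. -/
def MonDeg (d : ℕ) : Set (ℕ × ℕ × ℕ) := {m | m.1 + m.2.1 + m.2.2 = d}

/-- The lexicographic order on monomials with `x₁ > x₂ > x₃`:
`m < m'` iff `a < a'`, or `a = a'` and `b < b'`. -/
def LexLt (m m' : ℕ × ℕ × ℕ) : Prop :=
  m.1 < m'.1 ∨ (m.1 = m'.1 ∧ m.2.1 < m'.2.1)

/-- The number of degree-`d` monomials lex-smaller than `m`
(so `m` is the `(lexRank d m + 1)`-th lex-smallest degree-`d` monomial). -/
noncomputable def lexRank (d : ℕ) (m : ℕ × ℕ × ℕ) : ℕ :=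
  Set.ncard {m' | m' ∈ MonDeg d ∧ LexLt m' m}

/-- The degree-`d` lex segment of colength `h`:
all degree-`d` monomials except the `h` lex-smallest ones. -/
def LexSeg (d h : ℕ) : Set (ℕ × ℕ × ℕ) := {m | m ∈ MonDeg d ∧ h ≤ lexRank d m}

/-- Divisibility of monomials. -/
def MonDvd (m m' : ℕ × ℕ × ℕ) : Prop :=
  m.1 ≤ m'.1 ∧ m.2.1 ≤ m'.2.1 ∧ m.2.2 ≤ m'.2.2

/-- `m(T)`: the largest index `ℓ ∈ {1, 2, 3}` such that `x_ℓ` divides `T`. -/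
def maxVar (m : ℕ × ℕ × ℕ) : ℕ :=
  if 0 < m.2.2 then 3 else if 0 < m.2.1 then 2 else 1

/-! ### Auxiliary lemmas -/

def rowSum (D a : ℕ) : ℕ := (Finset.range a).sum (fun x => D + 1 - x)

lemma rowSum_succ (D a : ℕ) : rowSum D (a+1) = rowSum D a + (D + 1 - a) := by
  simp [rowSum, Finset.sum_range_succ]

lemma two_rowSum (D : ℕ) {a : ℕ} (h : a ≤ D + 1) :
    2 * (rowSum D a : ℤ) = a * (2 * D + 3 - a) := by
  induction a with
  | zero => simp [rowSum]
  | succ n ih =>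
    have hn : n ≤ D + 1 := by omega
    rw [rowSum_succ]
    have hcast : ((rowSum D n + (D + 1 - n) : ℕ) : ℤ) = (rowSum D n : ℤ) + (D + 1 - n) := by
      push_cast [Nat.cast_sub (by omega : n ≤ D + 1)]
      ring
    rw [hcast]
    have := ih hn
    push_cast
    ring_nf
    ring_nf at this
    linarith

lemma lexRank_eq (D a b c : ℕ) (h : a + b + c = D) :
    lexRank D (a, b, c) = rowSum D a + b := by
  classical
  have hset : {m' | m' ∈ MonDeg D ∧ LexLt m' (a, b, c)} =
      ↑(((Finset.range a).biUnion fun x =>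
          (Finset.range (D + 1 - x)).image fun y => (x, y, D - x - y)) ∪
        (Finset.range b).image fun y => (a, y, D - a - y)) := by
    ext ⟨x, y, z⟩
    simp only [Set.mem_setOf_eq, MonDeg, LexLt, Finset.coe_union, Set.mem_union,
      Finset.coe_biUnion, Set.mem_iUnion, Finset.mem_coe, Finset.mem_image,
      Finset.mem_range, Prod.mk.injEq]
    constructor
    · rintro ⟨hsum, hx | ⟨hx, hy⟩⟩
      · exact Or.inl ⟨x, hx, y, by omega, rfl, rfl, by omega⟩
      · exact Or.inr ⟨y, hy, by omega, rfl, by omega⟩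
    · rintro (⟨x', hx', y', hy', rfl, rfl, rfl⟩ | ⟨y', hy', rfl, rfl, rfl⟩)
      · exact ⟨by omega, Or.inl hx'⟩
      · exact ⟨by omega, Or.inr ⟨rfl, hy'⟩⟩
  rw [lexRank, hset, Set.ncard_coe_finset]
  have hinj : ∀ x : ℕ, Function.Injective (fun y => (x, y, D - x - y) : ℕ → ℕ × ℕ × ℕ) := by
    intro x y1 y2 hy
    simp only [Prod.mk.injEq] at hy
    exact hy.2.1
  rw [Finset.card_union_of_disjoint, Finset.card_biUnion,
    Finset.card_image_of_injective _ (hinj a), Finset.card_range]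
  · congr 1
    refine Finset.sum_congr rfl fun x _ => ?_
    rw [Finset.card_image_of_injective _ (hinj x), Finset.card_range]
  · intro x hx y hy hxy
    simp only [Finset.disjoint_left, Finset.mem_image, Finset.mem_range]
    rintro m ⟨u, hu, rfl⟩ ⟨v, hv, hm⟩
    simp only [Prod.mk.injEq] at hm
    exact hxy hm.1.symm
  · simp only [Finset.disjoint_left, Finset.mem_biUnion, Finset.mem_image, Finset.mem_range]
    rintro m ⟨x, hx, u, hu, rfl⟩ ⟨v, hv, hm⟩
    simp only [Prod.mk.injEq] at hm
    omega

lemma mem_lexSeg_iff (D h' a b c : ℕ) (hsum : a + b + c = D) :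
    (a, b, c) ∈ LexSeg D h' ↔ 2 * (h' : ℤ) ≤ a * (2 * D + 3 - a) + 2 * b := by
  have hr := lexRank_eq D a b c hsum
  have h2 := two_rowSum D (by omega : a ≤ D + 1)
  constructor
  · rintro ⟨-, hle⟩
    have : (h' : ℤ) ≤ (rowSum D a : ℤ) + b := by exact_mod_cast hr ▸ Nat.cast_le.2 hle
    linarith
  · intro hle
    refine ⟨by exact hsum, ?_⟩
    rw [hr]
    have : (h' : ℤ) ≤ (rowSum D a : ℤ) + b := by linarith
    exact_mod_cast this

set_option maxHeartbeats 1000000 in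
/-- Case 1-2 of Proposition 3.4: for `d ≥ 1`, `1 ≤ κ ≤ d` and
`(κ-1)d - κ(κ-5)/2 ≤ i ≤ κd - κ(κ-1)/2`, the monomials of the degree-`(d+1)` lex
segment of colength `d + i` having no divisor in the degree-`d` lex segment of colength
`d + i` are exactly the `κ` monomials `x₁^κ x₂^{e+t} x₃^{(d+1-κ-e)-t}` for
`t = 0, 1, …, κ-1`, where `e = i - (κ-1)d + κ(κ-5)/2`; in particular there are exactly
`κ` of them and each is divisible by `x₃`. -/
theorem stmt10 (d i κ e : ℕ) (hd : 1 ≤ d) (hκ1 : 1 ≤ κ) (hκd : κ ≤ d)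
    (hlow : ((κ : ℤ) - 1) * d - (κ : ℤ) * ((κ : ℤ) - 5) / 2 ≤ (i : ℤ))
    (hup : (i : ℤ) ≤ (κ : ℤ) * d - (κ : ℤ) * ((κ : ℤ) - 1) / 2)
    (he : (e : ℤ) = (i : ℤ) - ((κ : ℤ) - 1) * d + (κ : ℤ) * ((κ : ℤ) - 5) / 2)
    (G : Set (ℕ × ℕ × ℕ))
    (hG : G = {T | T ∈ LexSeg (d + 1) (d + i) ∧ ∀ S ∈ LexSeg d (d + i), ¬ MonDvd S T}) :
    G = {T | T.1 = κ ∧ ∃ t < κ, T.2.1 = e + t ∧ T.2.2 + (κ + e + t) = d + 1} ∧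
    G.ncard = κ ∧ ∀ T ∈ G, 0 < T.2.2 := by
  classical
  obtain ⟨m, hm⟩ : ∃ m : ℤ, (κ : ℤ) * ((κ : ℤ) - 5) = 2 * m := by
    rcases Int.even_or_odd (κ : ℤ) with ⟨k, hk⟩ | ⟨k, hk⟩
    · exact ⟨k * ((κ : ℤ) - 5), by rw [hk]; ring⟩
    · exact ⟨(κ : ℤ) * (k - 2), by rw [hk]; ring⟩
  have hdiv2 : (κ : ℤ) * ((κ : ℤ) - 5) / 2 = m := by omega
  have hdiv2' : (κ : ℤ) * ((κ : ℤ) - 1) / 2 = m + 2 * κ := by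
    have h4 : (κ : ℤ) * ((κ : ℤ) - 1) = 2 * (m + 2 * κ) := by linear_combination hm
    omega
  rw [hdiv2] at hlow he
  rw [hdiv2'] at hup
  have hκdZ : (κ : ℤ) ≤ (d : ℤ) := by exact_mod_cast hκd
  have hκ1Z : (1 : ℤ) ≤ (κ : ℤ) := by exact_mod_cast hκ1
  -- key identity for 2(d+i)
  have hH : 2 * ((d : ℤ) + i) = (κ : ℤ) * (2 * d + 3 - κ) + 2 * κ + 2 * e := by
    linear_combination (-2 : ℤ) * he + hm
  -- e + 2κ ≤ d
  have hbZ : (e : ℤ) + 2 * κ ≤ d := by linarith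
  have hbN : e + 2 * κ ≤ d := by exact_mod_cast hbZ
  have hGeq : G = {T | T.1 = κ ∧ ∃ t < κ, T.2.1 = e + t ∧ T.2.2 + (κ + e + t) = d + 1} := by
    rw [hG]
    ext ⟨A, B, C⟩
    simp only [Set.mem_setOf_eq]
    constructor
    · rintro ⟨hTseg, hnodvd⟩
      have hsum : A + B + C = d + 1 := hTseg.1
      have hrank : 2 * ((d : ℤ) + i) ≤ (A : ℤ) * (2 * (d + 1) + 3 - A) + 2 * B := by
        have := (mem_lexSeg_iff (d + 1) (d + i) A B C hsum).1 hTseg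
        push_cast at this ⊢
        linarith
      by_cases hC : 0 < C
      · -- divisor (A, B, C-1)
        have hdR : (A : ℤ) * (2 * (d : ℤ) + 3 - A) + 2 * B < 2 * ((d : ℤ) + i) := by
          by_contra hc
          push_neg at hc
          refine hnodvd (A, B, C - 1) ?_ ⟨le_refl _, le_refl _, Nat.sub_le C 1⟩
          rw [mem_lexSeg_iff d (d + i) A B (C - 1) (by omega)]
          push_cast
          linarith
        have hABd : (A : ℤ) + B ≤ d := by exact_mod_cast (by omega : A + B ≤ d)
        have hAd : (A : ℤ) ≤ (d : ℤ) + 1 := by exact_mod_cast (by omega : A ≤ d + 1)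
        have hB0 : (0 : ℤ) ≤ (B : ℤ) := Int.natCast_nonneg B
        have hAκ : A = κ := by
          rcases lt_trichotomy A κ with hlt | heq | hgt
          · exfalso
            have hltZ : (A : ℤ) ≤ (κ : ℤ) - 1 := by
              have : (A : ℤ) < κ := by exact_mod_cast hlt
              linarith
            have h1 : (0 : ℤ) ≤ ((κ : ℤ) - 1 - A) * (2 * d + 4 - κ - A) := by
              apply mul_nonneg <;> linarith
            linarith [hrank, hlow, hm, hABd, h1]
          · exact heq
          · exfalso
            have hgtZ : (κ : ℤ) + 1 ≤ (A : ℤ) := by exact_mod_cast hgt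
            have h2 : (0 : ℤ) ≤ ((A : ℤ) - κ - 1) * (2 * d + 2 - A - κ) := by
              apply mul_nonneg <;> linarith
            linarith [hdR, hup, hm, hB0, h2]
        subst hAκ
        have hbl : (e : ℤ) ≤ B := by linarith
        have hbu : (B : ℤ) < (e : ℤ) + A := by linarith
        have hblN : e ≤ B := by exact_mod_cast hbl
        have hbuN : B < e + A := by exact_mod_cast hbu
        exact ⟨rfl, B - e, by omega, by omega, by omega⟩
      · -- C = 0
        exfalso
        have hC0 : C = 0 := by omega
        by_cases hB : 0 < B
        · -- divisor (A, B-1, 0)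
          have hdR0 : (A : ℤ) * (2 * (d : ℤ) + 3 - A) + 2 * ((B : ℤ) - 1) < 2 * ((d : ℤ) + i) := by
            by_contra hc
            push_neg at hc
            refine hnodvd (A, B - 1, C) ?_ ⟨le_refl _, Nat.sub_le B 1, le_refl _⟩
            rw [mem_lexSeg_iff d (d + i) A (B - 1) C (by omega)]
            push_cast [Nat.cast_sub (by omega : 1 ≤ B)]
            linarith
          have hBval : (A : ℤ) + B = (d : ℤ) + 1 := by
            exact_mod_cast (by omega : A + B = d + 1)
          have hAdZ : (A : ℤ) ≤ (d : ℤ) := by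
            have : A ≤ d := by omega
            exact_mod_cast this
          rcases lt_or_ge A κ with hlt | hge
          · have hltZ : (A : ℤ) ≤ (κ : ℤ) - 1 := by
              have : (A : ℤ) < κ := by exact_mod_cast hlt
              linarith
            have h1 : (0 : ℤ) ≤ ((κ : ℤ) - 1 - A) * (2 * d + 4 - κ - A) := by
              apply mul_nonneg <;> linarith
            linarith [hrank, hlow, hm, hBval, h1]
          · have hgeZ : (κ : ℤ) ≤ (A : ℤ) := by exact_mod_cast hge
            have h2 : (0 : ℤ) ≤ ((A : ℤ) - κ) * (2 * d + 1 - A - κ) := by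
              apply mul_nonneg <;> linarith
            linarith [hdR0, hup, hm, hBval, h2]
        · -- B = 0, C = 0, A = d + 1 : divisor (d, 0, 0)
          have hA : A = d + 1 := by omega
          refine hnodvd (d, 0, 0) ?_ ⟨by simp; omega, by simp, by simp⟩
          rw [mem_lexSeg_iff d (d + i) d 0 0 (by omega)]
          push_cast
          linarith [hup, hm, sq_nonneg ((d : ℤ) - κ), hκdZ]
    · rintro ⟨hA, t, ht, hB, hC⟩
      have htZ : (t : ℤ) ≤ (κ : ℤ) - 1 := by
        have : (t : ℤ) < κ := by exact_mod_cast ht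
        linarith
      have ht0 : (0 : ℤ) ≤ (t : ℤ) := by positivity
      have htd : κ + e + t + 1 ≤ d := by omega
      subst hA hB
      have hsum : A + (e + t) + C = d + 1 := by omega
      constructor
      · rw [mem_lexSeg_iff (d + 1) (d + i) A (e + t) C hsum]
        push_cast
        linarith
      · rintro ⟨s1, s2, s3⟩ hS ⟨hd1, hd2, hd3⟩
        have hSsum : s1 + s2 + s3 = d := hS.1
        have hSrank := (mem_lexSeg_iff d (d + i) s1 s2 s3 hSsum).1 hS
        push_cast at hSrank
        simp only at hd1 hd2 hd3
        have hs1Z : (s1 : ℤ) ≤ A := by exact_mod_cast hd1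
        have hs2Z : (s2 : ℤ) ≤ (e : ℤ) + t := by exact_mod_cast hd2
        have hs1d : (s1 : ℤ) ≤ d := by
          have : s1 ≤ d := by omega
          exact_mod_cast this
        have hmono : (s1 : ℤ) * (2 * d + 3 - s1) ≤ (A : ℤ) * (2 * d + 3 - A) := by
          have hprod := mul_nonneg (by linarith : (0 : ℤ) ≤ (A : ℤ) - s1)
            (by linarith : (0 : ℤ) ≤ 2 * (d : ℤ) + 3 - A - s1)
          nlinarith [hprod]
        linarith
  refine ⟨hGeq, ?_, ?_⟩
  · rw [hGeq]
    have hfin : {T : ℕ × ℕ × ℕ | T.1 = κ ∧ ∃ t < κ, T.2.1 = e + t ∧ T.2.2 + (κ + e + t) = d + 1}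
        = ↑((Finset.range κ).image fun t => (κ, e + t, d + 1 - (κ + e + t))) := by
      ext ⟨A, B, C⟩
      simp only [Set.mem_setOf_eq, Finset.coe_image, Set.mem_image, Finset.mem_coe,
        Finset.mem_range, Prod.mk.injEq]
      constructor
      · rintro ⟨rfl, t, ht, rfl, hC⟩
        exact ⟨t, ht, rfl, rfl, by omega⟩
      · rintro ⟨t, ht, rfl, rfl, rfl⟩
        exact ⟨rfl, t, ht, rfl, by omega⟩
    rw [hfin, Set.ncard_coe_finset,
      Finset.card_image_of_injOn (fun t1 _ t2 _ h => by
        simp only [Prod.mk.injEq] at h; omega),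
      Finset.card_range]
  · intro T hT
    rw [hGeq] at hT
    obtain ⟨hA, t, ht, hB, hC⟩ := hT
    omega
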